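/- The tensor rank-one fitting correlation bound via HOSVD truncation: for any tensor Y ∈ ℝ^{n₁×n₂×n₃}, the best rank-one approximation value max_{unit u,v,w} ⟨Y, u⊗v⊗w⟩ is at least ‖Y‖_F / √(n₁ n₂), i.e., ‖Y‖_σ ≥ ‖Y‖_F / √(min over pairs of products of two dimensions). -/

import Mathlib

open scoped RealInnerProductSpace
noncomputable section

/-- The space of `n₁ × n₂ × n₃` real tensors with the Frobenius (Euclidean) norm. -/
abbrev Tensor (n₁ n₂ n₃ : ℕ) := EuclideanSpace ℝ (Fin n₁ × Fin n₂ × Fin n₃)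

/-- Rank-one tensor `u ⊗ v ⊗ w`. -/
def rk1 {n₁ n₂ n₃ : ℕ} (u : EuclideanSpace ℝ (Fin n₁)) (v : EuclideanSpace ℝ (Fin n₂))
    (w : EuclideanSpace ℝ (Fin n₃)) : Tensor n₁ n₂ n₃ :=
  WithLp.toLp 2 (fun p => u p.1 * v p.2.1 * w p.2.2)

/-- Values `∑ℓ |cℓ|` over finite decompositions of `X` into scaled unit rank-one tensors. -/
def nuclearSet {n₁ n₂ n₃ : ℕ} (X : Tensor n₁ n₂ n₃) : Set ℝ :=
  { s | ∃ (r : ℕ) (c : Fin r → ℝ) (u : Fin r → EuclideanSpace ℝ (Fin n₁))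
        (v : Fin r → EuclideanSpace ℝ (Fin n₂)) (w : Fin r → EuclideanSpace ℝ (Fin n₃)),
      (∀ ℓ, ‖u ℓ‖ = 1) ∧ (∀ ℓ, ‖v ℓ‖ = 1) ∧ (∀ ℓ, ‖w ℓ‖ = 1) ∧
      X = ∑ ℓ, c ℓ • rk1 (u ℓ) (v ℓ) (w ℓ) ∧ s = ∑ ℓ, |c ℓ| }

/-- Tensor nuclear norm. -/
def nuclearNorm {n₁ n₂ n₃ : ℕ} (X : Tensor n₁ n₂ n₃) : ℝ := sInf (nuclearSet X)

/-- Tensor spectral norm: supremum of `⟨Y, u ⊗ v ⊗ w⟩` over unit vectors. -/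
def specNorm {n₁ n₂ n₃ : ℕ} (Y : Tensor n₁ n₂ n₃) : ℝ :=
  sSup { x | ∃ (u : EuclideanSpace ℝ (Fin n₁)) (v : EuclideanSpace ℝ (Fin n₂))
      (w : EuclideanSpace ℝ (Fin n₃)),
      ‖u‖ = 1 ∧ ‖v‖ = 1 ∧ ‖w‖ = 1 ∧ x = ⟪Y, rk1 u v w⟫ }

/-! Each fiber `Y(i, j, ·)` is met by `eᵢ ⊗ eⱼ ⊗ w`, so `‖Y‖_σ` bounds the norm of every fiber.
The `n₁ n₂` fibers along the third mode partition the entries of `Y`, hence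
`‖Y‖² = ∑ ‖fiber‖² ≤ n₁ n₂ ‖Y‖_σ²`; the same holds for the other two modes. -/

lemma norm_le_of_forall_inner_le {E : Type*} [NormedAddCommGroup E] [InnerProductSpace ℝ E]
    {f : E} {s : ℝ} (hs : 0 ≤ s) (h : ∀ w : E, ‖w‖ = 1 → ⟪f, w⟫ ≤ s) : ‖f‖ ≤ s := by
  rcases eq_or_ne f 0 with rfl | hf
  · simpa using hs
  have hf' : ‖f‖ ≠ 0 := norm_ne_zero_iff.mpr hf
  calc ‖f‖ = ⟪f, ‖f‖⁻¹ • f⟫ := by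
        rw [real_inner_smul_right, real_inner_self_eq_norm_sq]; field_simp
    _ ≤ s := h _ (by rw [norm_smul, norm_inv, norm_norm, inv_mul_cancel₀ hf'])

lemma div_sqrt_card_le_of_sq_le_sum_sq {ι E : Type*} [Fintype ι] [SeminormedAddGroup E]
    {a s : ℝ} {f : ι → E} (hs : 0 ≤ s) (ha : a ^ 2 ≤ ∑ i, ‖f i‖ ^ 2) (hf : ∀ i, ‖f i‖ ≤ s) :
    a / √(Fintype.card ι) ≤ s := by
  rcases Nat.eq_zero_or_pos (Fintype.card ι) with hι | hι
  · simpa [hι] using hs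
  have hsq : a ^ 2 ≤ (√(Fintype.card ι) * s) ^ 2 := calc
    a ^ 2 ≤ ∑ _i : ι, s ^ 2 :=
      ha.trans <| Finset.sum_le_sum fun i _ => pow_le_pow_left₀ (norm_nonneg _) (hf i) 2
    _ = (√(Fintype.card ι) * s) ^ 2 := by
      rw [mul_pow, Real.sq_sqrt (Nat.cast_nonneg _)]; simp
  rw [div_le_iff₀' (by positivity)]
  exact (abs_le_of_sq_le_sq' hsq (by positivity)).2

section

variable {n₁ n₂ n₃ : ℕ}

lemma norm_rk1 (u : EuclideanSpace ℝ (Fin n₁)) (v : EuclideanSpace ℝ (Fin n₂))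
    (w : EuclideanSpace ℝ (Fin n₃)) : ‖rk1 u v w‖ = ‖u‖ * ‖v‖ * ‖w‖ := by
  simp only [EuclideanSpace.norm_eq]
  rw [← Real.sqrt_mul (by positivity), ← Real.sqrt_mul (by positivity)]
  congr 1
  simp only [rk1, Fintype.sum_prod_type, norm_mul, mul_pow, Real.norm_eq_abs, sq_abs,
    ← Finset.sum_mul, ← Finset.mul_sum]

lemma rk1_neg_left (u : EuclideanSpace ℝ (Fin n₁)) (v : EuclideanSpace ℝ (Fin n₂))
    (w : EuclideanSpace ℝ (Fin n₃)) : rk1 (-u) v w = -rk1 u v w := by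
  ext p
  simp [rk1]

lemma inner_rk1_le_specNorm (Y : Tensor n₁ n₂ n₃) {u : EuclideanSpace ℝ (Fin n₁)}
    {v : EuclideanSpace ℝ (Fin n₂)} {w : EuclideanSpace ℝ (Fin n₃)}
    (hu : ‖u‖ = 1) (hv : ‖v‖ = 1) (hw : ‖w‖ = 1) : ⟪Y, rk1 u v w⟫ ≤ specNorm Y := by
  refine le_csSup ⟨‖Y‖, ?_⟩ ⟨u, v, w, hu, hv, hw, rfl⟩
  rintro _ ⟨u, v, w, hu, hv, hw, rfl⟩
  calc ⟪Y, rk1 u v w⟫ ≤ ‖Y‖ * ‖rk1 u v w‖ := real_inner_le_norm _ _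
    _ = ‖Y‖ := by rw [norm_rk1, hu, hv, hw, mul_one, mul_one, mul_one]

/-- If some `nᵢ = 0` there are no unit vectors and `specNorm Y = sSup ∅ = 0`; otherwise the
defining set is symmetric under `u ↦ -u`. -/
lemma specNorm_nonneg (Y : Tensor n₁ n₂ n₃) : 0 ≤ specNorm Y := by
  by_cases h : ∃ (u : EuclideanSpace ℝ (Fin n₁)) (v : EuclideanSpace ℝ (Fin n₂))
      (w : EuclideanSpace ℝ (Fin n₃)), ‖u‖ = 1 ∧ ‖v‖ = 1 ∧ ‖w‖ = 1
  · obtain ⟨u, v, w, hu, hv, hw⟩ := h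
    have h_pos := inner_rk1_le_specNorm Y hu hv hw
    have h_neg := inner_rk1_le_specNorm Y ((norm_neg u).trans hu) hv hw
    rw [rk1_neg_left, inner_neg_right] at h_neg
    linarith
  · exact Real.sSup_nonneg fun _ ⟨u, v, w, hu, hv, hw, _⟩ => (h ⟨u, v, w, hu, hv, hw⟩).elim

def fiber₃ (Y : Tensor n₁ n₂ n₃) (i : Fin n₁) (j : Fin n₂) : EuclideanSpace ℝ (Fin n₃) :=
  WithLp.toLp 2 fun k => Y (i, j, k)

lemma inner_rk1_eq_inner_fiber₃ (Y : Tensor n₁ n₂ n₃) (i : Fin n₁) (j : Fin n₂)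
    (w : EuclideanSpace ℝ (Fin n₃)) :
    ⟪Y, rk1 (EuclideanSpace.single i 1) (EuclideanSpace.single j 1) w⟫ = ⟪fiber₃ Y i j, w⟫ := by
  simp [PiLp.inner_apply, rk1, fiber₃, Fintype.sum_prod_type]

lemma sum_norm_fiber₃_sq (Y : Tensor n₁ n₂ n₃) :
    ∑ p : Fin n₁ × Fin n₂, ‖fiber₃ Y p.1 p.2‖ ^ 2 = ‖Y‖ ^ 2 := by
  simp [EuclideanSpace.norm_sq_eq, fiber₃, Fintype.sum_prod_type]

def fiber₂ (Y : Tensor n₁ n₂ n₃) (i : Fin n₁) (k : Fin n₃) : EuclideanSpace ℝ (Fin n₂) :=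
  WithLp.toLp 2 fun j => Y (i, j, k)

lemma inner_rk1_eq_inner_fiber₂ (Y : Tensor n₁ n₂ n₃) (i : Fin n₁) (k : Fin n₃)
    (v : EuclideanSpace ℝ (Fin n₂)) :
    ⟪Y, rk1 (EuclideanSpace.single i 1) v (EuclideanSpace.single k 1)⟫ = ⟪fiber₂ Y i k, v⟫ := by
  simp [PiLp.inner_apply, rk1, fiber₂, Fintype.sum_prod_type]

lemma sum_norm_fiber₂_sq (Y : Tensor n₁ n₂ n₃) :
    ∑ p : Fin n₁ × Fin n₃, ‖fiber₂ Y p.1 p.2‖ ^ 2 = ‖Y‖ ^ 2 := by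
  simp [EuclideanSpace.norm_sq_eq, fiber₂, Fintype.sum_prod_type, Finset.sum_comm (γ := Fin n₂)]

def fiber₁ (Y : Tensor n₁ n₂ n₃) (j : Fin n₂) (k : Fin n₃) : EuclideanSpace ℝ (Fin n₁) :=
  WithLp.toLp 2 fun i => Y (i, j, k)

lemma inner_rk1_eq_inner_fiber₁ (Y : Tensor n₁ n₂ n₃) (j : Fin n₂) (k : Fin n₃)
    (u : EuclideanSpace ℝ (Fin n₁)) :
    ⟪Y, rk1 u (EuclideanSpace.single j 1) (EuclideanSpace.single k 1)⟫ = ⟪fiber₁ Y j k, u⟫ := by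
  simp [PiLp.inner_apply, rk1, fiber₁, Fintype.sum_prod_type]

lemma sum_norm_fiber₁_sq (Y : Tensor n₁ n₂ n₃) :
    ∑ p : Fin n₂ × Fin n₃, ‖fiber₁ Y p.1 p.2‖ ^ 2 = ‖Y‖ ^ 2 := by
  simp [EuclideanSpace.norm_sq_eq, fiber₁, Fintype.sum_prod_type, Finset.sum_comm (γ := Fin n₁)]

lemma norm_div_sqrt_mul_le_specNorm₁₂ (Y : Tensor n₁ n₂ n₃) :
    ‖Y‖ / √(n₁ * n₂ : ℕ) ≤ specNorm Y := by
  have h_fiber (i : Fin n₁) (j : Fin n₂) : ‖fiber₃ Y i j‖ ≤ specNorm Y :=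
    norm_le_of_forall_inner_le (specNorm_nonneg Y) fun w hw =>
      inner_rk1_eq_inner_fiber₃ Y i j w ▸ inner_rk1_le_specNorm Y (by simp) (by simp) hw
  simpa using div_sqrt_card_le_of_sq_le_sum_sq (specNorm_nonneg Y) (sum_norm_fiber₃_sq Y).ge
    fun p => h_fiber p.1 p.2

lemma norm_div_sqrt_mul_le_specNorm₁₃ (Y : Tensor n₁ n₂ n₃) :
    ‖Y‖ / √(n₁ * n₃ : ℕ) ≤ specNorm Y := by
  have h_fiber (i : Fin n₁) (k : Fin n₃) : ‖fiber₂ Y i k‖ ≤ specNorm Y :=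
    norm_le_of_forall_inner_le (specNorm_nonneg Y) fun v hv =>
      inner_rk1_eq_inner_fiber₂ Y i k v ▸ inner_rk1_le_specNorm Y (by simp) hv (by simp)
  simpa using div_sqrt_card_le_of_sq_le_sum_sq (specNorm_nonneg Y) (sum_norm_fiber₂_sq Y).ge
    fun p => h_fiber p.1 p.2

lemma norm_div_sqrt_mul_le_specNorm₂₃ (Y : Tensor n₁ n₂ n₃) :
    ‖Y‖ / √(n₂ * n₃ : ℕ) ≤ specNorm Y := by
  have h_fiber (j : Fin n₂) (k : Fin n₃) : ‖fiber₁ Y j k‖ ≤ specNorm Y :=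
    norm_le_of_forall_inner_le (specNorm_nonneg Y) fun u hu =>
      inner_rk1_eq_inner_fiber₁ Y j k u ▸ inner_rk1_le_specNorm Y hu (by simp) (by simp)
  simpa using div_sqrt_card_le_of_sq_le_sum_sq (specNorm_nonneg Y) (sum_norm_fiber₁_sq Y).ge
    fun p => h_fiber p.1 p.2

end

theorem specNorm_ge_frobenius_div_sqrt_general {n₁ n₂ n₃ : ℕ} (Y : Tensor n₁ n₂ n₃) :
    ‖Y‖ / Real.sqrt (min (n₁ * n₂) (min (n₁ * n₃) (n₂ * n₃)) : ℕ) ≤ specNorm Y := by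
  let bound (N : ℕ) : Prop := ‖Y‖ / √(N : ℝ) ≤ specNorm Y
  exact min_rec' bound (norm_div_sqrt_mul_le_specNorm₁₂ Y)
    (min_rec' bound (norm_div_sqrt_mul_le_specNorm₁₃ Y) (norm_div_sqrt_mul_le_specNorm₂₃ Y))

/-- best rank-one correlation bound: for any tensor `Y`,
`‖Y‖_σ ≥ ‖Y‖_F / √(min over pairs of products of two dimensions)`. -/
theorem specNorm_ge_frobenius_div_sqrt {n₁ n₂ n₃ : ℕ}
    (h₁ : 0 < n₁) (h₂ : 0 < n₂) (h₃ : 0 < n₃) (Y : Tensor n₁ n₂ n₃) :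
    ‖Y‖ / Real.sqrt (min (n₁ * n₂) (min (n₁ * n₃) (n₂ * n₃)) : ℕ) ≤ specNorm Y :=
  specNorm_ge_frobenius_div_sqrt_general Y
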